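/- For any Ω ∈ (-1,1) and Γ > 0, setting α = √(1+Ω), β = √(1-Ω), μ = √(1-Ω²), the complex-valued functions A(Z) = √(2/(3Γ)) μ / (α cosh(μZ) - iβ sinh(μZ)) and B(Z) = -√(2/(3Γ)) μ / (α cosh(μZ) + iβ sinh(μZ)) satisfy the stationary coupled mode equations iA' + ΩA + B + Γ(|A|² + 2|B|²)A = 0 and -iB' + ΩB + A + Γ(2|A|² + |B|²)B = 0 on ℝ. -/

import Mathlib

/-!
Since `B = -conj A`, the second coupled mode equation is the negated complex conjugate of the
first, and `|A| = |B|`. Writing `A = k / D` with `D = α cosh (μZ) - iβ sinh (μZ)` and `k` real,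
the first equation multiplied by `D² conj D / k` becomes
`-i D' conj D + Ω |D|² - D² + 3Γk² = 0`, a polynomial identity in `cosh` and `sinh` that holds
because `α² = 1 + Ω`, `β² = 1 - Ω`, `αβ = μ`, `cosh² - sinh² = 1` and `3Γk² = 2μ²`.
-/

open Complex ComplexConjugate

noncomputable def nlcmeResidualA (Ω Γ : ℝ) (A B : ℝ → ℂ) (Z : ℝ) : ℂ :=
  I * deriv A Z + Ω * A Z + B Z + ((Γ * (‖A Z‖ ^ 2 + 2 * ‖B Z‖ ^ 2) : ℝ) : ℂ) * A Z

noncomputable def nlcmeResidualB (Ω Γ : ℝ) (A B : ℝ → ℂ) (Z : ℝ) : ℂ :=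
  -I * deriv B Z + Ω * B Z + A Z + ((Γ * (2 * ‖A Z‖ ^ 2 + ‖B Z‖ ^ 2) : ℝ) : ℂ) * B Z

theorem nlcmeResidualB_neg_conj (Ω Γ : ℝ) (A : ℝ → ℂ) (Z : ℝ) :
    nlcmeResidualB Ω Γ A (fun z => -conj (A z)) Z =
      -conj (nlcmeResidualA Ω Γ A (fun z => -conj (A z)) Z) := by
  have hderiv : deriv (fun z => -conj (A z)) Z = -conj (deriv A Z) := by
    rw [deriv.fun_neg, neg_inj]
    exact deriv.star (f := A)
  simp only [nlcmeResidualA, nlcmeResidualB, hderiv, norm_neg, norm_conj, map_add, map_mul,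
    map_neg, conj_I, conj_ofReal, conj_conj]
  push_cast
  ring

theorem nlcmeResidualA_div_eq_zero {Ω Γ k : ℝ} {D : ℝ → ℂ} {D' : ℂ} {Z : ℝ}
    (hD : HasDerivAt D D' Z) (hD0 : D Z ≠ 0)
    (h : -I * D' * conj (D Z) + Ω * (D Z * conj (D Z)) - D Z ^ 2 + 3 * Γ * k ^ 2 = 0) :
    nlcmeResidualA Ω Γ (fun z => k / D z) (fun z => -conj (k / D z)) Z = 0 := by
  have hderiv : deriv (fun z => (k : ℂ) / D z) Z = -(k * D') / D Z ^ 2 := by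
    simpa using ((hasDerivAt_const Z (k : ℂ)).fun_div hD hD0).deriv
  have hnormSq : ((‖(k : ℂ) / D Z‖ ^ 2 : ℝ) : ℂ) = k ^ 2 / (D Z * conj (D Z)) := by
    rw [Complex.sq_norm, ← Complex.mul_conj, map_div₀, conj_ofReal, div_mul_div_comm, sq]
  have hconj0 : conj (D Z) ≠ 0 := (map_ne_zero _).2 hD0
  rw [nlcmeResidualA, norm_neg, norm_conj]
  simp only [hderiv, ofReal_mul, ofReal_add, ofReal_ofNat, hnormSq, map_div₀, conj_ofReal]
  field_simp
  linear_combination k * h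

theorem gapSoliton_polynomial_identity {α β μ Ω c s : ℂ} (hα : α ^ 2 = 1 + Ω)
    (hβ : β ^ 2 = 1 - Ω) (hαβ : α * β = μ) (hcs : c ^ 2 - s ^ 2 = 1) :
    -I * (μ * (α * s - I * β * c)) * (α * c + I * β * s)
      + Ω * ((α * c - I * β * s) * (α * c + I * β * s)) - (α * c - I * β * s) ^ 2
      + 2 * μ ^ 2 = 0 := by
  linear_combination
    (μ * α * β * c ^ 2 - μ * α * β * s ^ 2 + I * μ * β ^ 2 * c * s - Ω * β ^ 2 * s ^ 2
      - β ^ 2 * s ^ 2) * I_sq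
    + (-I * μ * s * c + Ω * c ^ 2 - c ^ 2 + β ^ 2) * hα
    + (-I * μ * c * s + Ω * s ^ 2 + s ^ 2 + 1 + Ω) * hβ
    + (μ * s ^ 2 - μ * c ^ 2 + 2 * I * c * s - α * β - μ) * hαβ
    + (-μ ^ 2 + Ω ^ 2 - 1) * hcs

noncomputable def gapSolitonDenom (α β μ Z : ℝ) : ℂ :=
  α * Real.cosh (μ * Z) - I * β * Real.sinh (μ * Z)

section GapSolitonDenom

variable {α β μ Z : ℝ}

theorem conj_gapSolitonDenom :
    conj (gapSolitonDenom α β μ Z) = α * Real.cosh (μ * Z) + I * β * Real.sinh (μ * Z) := by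
  simp only [gapSolitonDenom, map_sub, map_mul, conj_ofReal, conj_I]
  ring

theorem gapSolitonDenom_ne_zero (hα : α ≠ 0) : gapSolitonDenom α β μ Z ≠ 0 := by
  intro h
  have hre := congrArg re h
  simp only [gapSolitonDenom, sub_re, mul_re, ofReal_re, ofReal_im, I_re, I_im, zero_re,
    mul_zero, zero_mul, sub_zero] at hre
  exact mul_ne_zero hα (Real.cosh_pos _).ne' hre

theorem hasDerivAt_gapSolitonDenom :
    HasDerivAt (gapSolitonDenom α β μ)
      (μ * (α * Real.sinh (μ * Z) - I * β * Real.cosh (μ * Z))) Z := by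
  have hlin : HasDerivAt (fun Z : ℝ => μ * Z) μ Z := by
    simpa using (hasDerivAt_id Z).const_mul μ
  have hcosh := ((Real.hasDerivAt_cosh (μ * Z)).comp Z hlin).ofReal_comp
  have hsinh := ((Real.hasDerivAt_sinh (μ * Z)).comp Z hlin).ofReal_comp
  exact ((hcosh.const_mul (α : ℂ)).fun_sub (hsinh.const_mul (I * β))).congr_deriv
    (by push_cast; ring)

theorem nlcmeResidualA_gapSoliton_eq_zero {Ω Γ k : ℝ} (hα0 : α ≠ 0) (hα : α ^ 2 = 1 + Ω)
    (hβ : β ^ 2 = 1 - Ω) (hαβ : α * β = μ) (hk : 3 * Γ * k ^ 2 = 2 * μ ^ 2) :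
    nlcmeResidualA Ω Γ (fun z => k / gapSolitonDenom α β μ z)
      (fun z => -conj (k / gapSolitonDenom α β μ z)) Z = 0 := by
  refine nlcmeResidualA_div_eq_zero hasDerivAt_gapSolitonDenom (gapSolitonDenom_ne_zero hα0) ?_
  have hcs : (Real.cosh (μ * Z) : ℂ) ^ 2 - (Real.sinh (μ * Z) : ℂ) ^ 2 = 1 := by
    exact_mod_cast Real.cosh_sq_sub_sinh_sq (μ * Z)
  have hα' : (α : ℂ) ^ 2 = 1 + Ω := by exact_mod_cast hα
  have hβ' : (β : ℂ) ^ 2 = 1 - Ω := by exact_mod_cast hβ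
  have hαβ' : (α : ℂ) * β = μ := by exact_mod_cast hαβ
  have hk' : 3 * (Γ : ℂ) * k ^ 2 = 2 * μ ^ 2 := by exact_mod_cast hk
  rw [conj_gapSolitonDenom, gapSolitonDenom]
  linear_combination gapSoliton_polynomial_identity hα' hβ' hαβ' hcs + hk'

end GapSolitonDenom

/-- The NLCME gap solitons satisfy the stationary coupled mode equations. -/
theorem stmt1 (Ω Γ : ℝ) (hΩ : Ω ∈ Set.Ioo (-1 : ℝ) 1) (hΓ : 0 < Γ)
    (α β μ : ℝ) (hα : α = Real.sqrt (1 + Ω)) (hβ : β = Real.sqrt (1 - Ω))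
    (hμ : μ = Real.sqrt (1 - Ω ^ 2))
    (A B : ℝ → ℂ)
    (hA : A = fun Z => (Real.sqrt (2 / (3 * Γ)) * μ : ℝ) /
      ((α : ℂ) * Real.cosh (μ * Z) - Complex.I * (β : ℂ) * Real.sinh (μ * Z)))
    (hB : B = fun Z => -((Real.sqrt (2 / (3 * Γ)) * μ : ℝ) : ℂ) /
      ((α : ℂ) * Real.cosh (μ * Z) + Complex.I * (β : ℂ) * Real.sinh (μ * Z))) :
    ∀ Z : ℝ,
      Complex.I * deriv A Z + (Ω : ℂ) * A Z + B Z +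
        ((Γ * (‖A Z‖ ^ 2 + 2 * ‖B Z‖ ^ 2) : ℝ) : ℂ) * A Z = 0 ∧
      -Complex.I * deriv B Z + (Ω : ℂ) * B Z + A Z +
        ((Γ * (2 * ‖A Z‖ ^ 2 + ‖B Z‖ ^ 2) : ℝ) : ℂ) * B Z = 0 := by
  obtain ⟨hΩlo, hΩhi⟩ := hΩ
  have hα2 : α ^ 2 = 1 + Ω := hα ▸ Real.sq_sqrt (by linarith)
  have hβ2 : β ^ 2 = 1 - Ω := hβ ▸ Real.sq_sqrt (by linarith)
  have hαβ : α * β = μ := by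
    rw [hα, hβ, hμ, ← Real.sqrt_mul (by linarith)]
    ring_nf
  have hα0 : α ≠ 0 := (hα ▸ Real.sqrt_pos.2 (by linarith) : 0 < α).ne'
  set k := Real.sqrt (2 / (3 * Γ)) * μ with hk
  have hk2 : 3 * Γ * k ^ 2 = 2 * μ ^ 2 := by
    rw [hk, mul_pow, Real.sq_sqrt (by positivity)]
    field_simp
  have hA' : A = fun Z => (k : ℂ) / gapSolitonDenom α β μ Z := hA
  have hB' : B = fun Z => -conj (A Z) := by
    funext Z
    rw [hB, hA']
    dsimp only
    rw [map_div₀, conj_ofReal, conj_gapSolitonDenom, neg_div]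
  intro Z
  have hresA : nlcmeResidualA Ω Γ A B Z = 0 := by
    rw [hB', hA']
    exact nlcmeResidualA_gapSoliton_eq_zero hα0 hα2 hβ2 hαβ hk2
  refine ⟨hresA, ?_⟩
  have hresB := nlcmeResidualB_neg_conj Ω Γ A Z
  rwa [← hB', hresA, map_zero, neg_zero] at hresB
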